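/- arXiv:2312.15001 — 2 statements merged into one kernel-verified Lean document; each statement's English description precedes it below -/
import Mathlib

section
/- Let w₁, ..., w_h ∈ ℝⁿ be pairwise non-colinear nonzero vectors and c₁, ..., c_h ∈ ℝ. If ∑ᵢ cᵢ ψ(⟨wᵢ,x⟩) = 0 for all x ∈ ℝⁿ, where ψ is the ReLU function, then cᵢ = 0 for every i. -/
/-!
Since `ψ t + ψ (-t) = |t|`, the hypothesis gives `∑ⱼ cⱼ |⟨wⱼ, x⟩| = 0` for all `x`.
Non-colinearity means that no hyperplane `wᵢ⊥` lies inside another `wⱼ⊥`; as a real vector space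
is not a finite union of proper subspaces, some `x₀ ∈ wᵢ⊥` avoids every `wⱼ⊥` with `j ≠ i`.
Along a short segment `x₀ + t v` through `x₀`, each term `j ≠ i` is affine in `t`, so the second
difference in `t` kills it and leaves `2 cᵢ |t| |⟨wᵢ, v⟩| = 0`.
-/

open Finset

noncomputable def relu (t : ℝ) : ℝ := max t 0

open Filter Topology LinearMap

lemma relu_add_relu_neg (t : ℝ) : relu t + relu (-t) = |t| :=
  max_zero_add_max_neg_zero_eq_abs_self t

lemma abs_add_add_abs_sub_of_abs_le {a s : ℝ} (h : |s| ≤ |a|) :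
    |a + s| + |a - s| = 2 * |a| := by
  rcases abs_le.1 h with ⟨h₁, h₂⟩
  rcases le_or_gt 0 a with ha | ha
  · rw [abs_of_nonneg ha] at h₁ h₂
    rw [abs_of_nonneg ha, abs_of_nonneg (by linarith), abs_of_nonneg (by linarith)]
    ring
  · rw [abs_of_neg ha] at h₁ h₂
    rw [abs_of_neg ha, abs_of_nonpos (by linarith), abs_of_nonpos (by linarith)]
    ring

lemma eventually_abs_add_add_abs_sub {a : ℝ} (ha : a ≠ 0) (b : ℝ) :
    ∀ᶠ t in 𝓝 0, |a + t * b| + |a - t * b| = 2 * |a| := by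
  have hlim : Tendsto (fun t : ℝ => t * b) (𝓝 0) (𝓝 0) := by
    simpa using (continuous_mul_const b).tendsto 0
  filter_upwards [hlim.eventually (eventually_abs_sub_lt 0 (abs_pos.2 ha))] with t ht
  exact abs_add_add_abs_sub_of_abs_le (by simpa using ht.le)

namespace Module.Dual

variable {K V : Type*} [Field K] [AddCommGroup V] [Module K V]

lemma exists_eq_smul_of_ker_le {f g : Module.Dual K V} (h : ker f ≤ ker g) :
    ∃ a : K, g = a • f := by
  have hspan : g ∈ Submodule.span K (Set.range fun _ : Unit => f) :=
    mem_span_of_iInf_ker_le_ker (by simpa using h)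
  obtain ⟨a, ha⟩ := (Submodule.mem_span_range_iff_exists_fun K).1 hspan
  exact ⟨a (), by simpa using ha.symm⟩

/-- A vector space over an infinite field is not a finite union of proper subspaces. -/
lemma exists_mem_ker_forall_apply_ne_zero [Infinite K] {ι : Type*} [Finite ι]
    (f : Module.Dual K V) (g : ι → Module.Dual K V) (h : ∀ j, ¬ ker f ≤ ker (g j)) :
    ∃ x ∈ ker f, ∀ j, g j x ≠ 0 := by
  by_contra! hcover
  let p : ι → Subspace K (ker f) := fun j => (ker (g j)).comap (ker f).subtype
  obtain ⟨j, hj⟩ := Subspace.exists_eq_top_of_iUnion_eq_univ (p := p) <|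
    Set.eq_univ_of_forall fun x => by
      obtain ⟨j, hj⟩ := hcover x x.2
      exact Set.mem_iUnion.2 ⟨j, hj⟩
  refine h j fun x hx => ?_
  simpa [p] using (Submodule.eq_top_iff'.1 hj ⟨x, hx⟩)

end Module.Dual

theorem eq_zero_of_forall_sum_mul_abs_eq_zero {ι V : Type*} [Fintype ι] [AddCommGroup V]
    [Module ℝ V] {f : ι → Module.Dual ℝ V} {c : ι → ℝ} (hf : ∀ i, f i ≠ 0)
    (hker : Pairwise fun i j => ¬ ker (f i) ≤ ker (f j))
    (h : ∀ x, ∑ j, c j * |f j x| = 0) (i : ι) : c i = 0 := by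
  obtain ⟨x₀, hx₀, hx₀_ne⟩ := Module.Dual.exists_mem_ker_forall_apply_ne_zero (f i)
    (fun j : {j // j ≠ i} => f j) fun j => hker j.2.symm
  obtain ⟨v, hv⟩ := DFunLike.ne_iff.1 (hf i)
  have hflat : ∀ᶠ t in 𝓝 0, ∀ j ≠ i,
      |f j x₀ + t * f j v| + |f j x₀ - t * f j v| = 2 * |f j x₀| := by
    refine eventually_all.2 fun j => ?_
    by_cases hj : j = i
    · exact Eventually.of_forall fun _ hne => absurd hj hne
    · filter_upwards [eventually_abs_add_add_abs_sub (hx₀_ne ⟨j, hj⟩) (f j v)] with t ht _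
      exact ht
  obtain ⟨t, ht, ht₀⟩ : ∃ t : ℝ, (∀ j ≠ i, _) ∧ t ≠ 0 :=
    ((hflat.filter_mono nhdsWithin_le_nhds).and self_mem_nhdsWithin).exists (f := 𝓝[≠] 0)
  have hsecond : ∑ j, c j * (|f j x₀ + t * f j v| + |f j x₀ - t * f j v| - 2 * |f j x₀|) = 0 := by
    have h_add := h (x₀ + t • v)
    have h_sub := h (x₀ - t • v)
    have h₀ := h x₀
    simp only [map_add, map_sub, map_smul, smul_eq_mul] at h_add h_sub
    simp only [mul_sub, mul_add, sum_sub_distrib, sum_add_distrib, h_add, h_sub,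
      mul_left_comm _ (2 : ℝ), ← mul_sum, h₀]
    ring
  rw [sum_eq_single i (fun j _ hj => by rw [ht j hj, sub_self, mul_zero])
    (fun hi => absurd (mem_univ i) hi), hx₀, zero_add, zero_sub, abs_neg, abs_zero,
    mul_zero, sub_zero, ← two_mul, abs_mul] at hsecond
  have hkink : |t| * |f i v| ≠ 0 := mul_ne_zero (abs_ne_zero.2 ht₀) (abs_ne_zero.2 hv)
  simpa [hkink] using hsecond

/-- If `w₁, ..., w_h` are nonzero and pairwise non-colinear and
`∑ᵢ cᵢ ψ(⟨wᵢ,x⟩) = 0` for all `x`, then all `cᵢ = 0`. -/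
theorem relu_units_linear_independent {n h : ℕ}
    (w : Fin h → (Fin n → ℝ)) (c : Fin h → ℝ)
    (hw : ∀ i, w i ≠ 0)
    (hcol : ∀ i j, i ≠ j → ¬ ∃ α : ℝ, α ≠ 0 ∧ w i = α • w j)
    (hzero : ∀ x : Fin n → ℝ, ∑ i, c i * relu (∑ j, w i j * x j) = 0) :
    ∀ i, c i = 0 := by
  let f : Fin h → Module.Dual ℝ (Fin n → ℝ) := fun i => dotProductEquiv ℝ (Fin n) (w i)
  have hf : ∀ i, f i ≠ 0 := fun i => (LinearEquiv.map_ne_zero_iff _).2 (hw i)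
  have hker : Pairwise fun i j => ¬ ker (f i) ≤ ker (f j) := by
    intro i j hij hle
    obtain ⟨α, hα⟩ := Module.Dual.exists_eq_smul_of_ker_le hle
    have hα₀ : α ≠ 0 := by rintro rfl; exact hf j (by simpa using hα)
    exact hcol j i hij.symm ⟨α, hα₀, (dotProductEquiv ℝ (Fin n)).injective (by rwa [map_smul])⟩
  have habs : ∀ x, ∑ i, c i * |f i x| = 0 := fun x => by
    have hneg : ∀ i, ∑ j, w i j * (-x) j = -∑ j, w i j * x j := by simp
    simpa [f, dotProduct, mul_add, sum_add_distrib, hneg, ← relu_add_relu_neg] using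
      congr($(hzero x) + $(hzero (-x)))
  exact eq_zero_of_forall_sum_mul_abs_eq_zero hf hker habs
end

section
/- Let w ∈ ℝⁿ be nonzero and let C⁺, C⁻ be finite families of vectors positively (resp. negatively) colinear with w, with coefficients c_v for v ∈ C⁺ ∪ C⁻. Suppose there exists an open ball B around a point x₀ with ⟨w, x₀⟩ = 0 such that ∑_{v∈C⁺∪C⁻} c_v ψ(⟨v,x⟩) is a fixed linear function of x on B. Then ∑_{v∈C⁺} c_v v = ∑_{v∈C⁻} c_v v implies the combined function ∑_v c_v ψ(⟨v,x⟩) restricted to B equals (∑_{v∈C⁺} c_v v)ᵀ x up to the linear part on both half-balls B⁺ = {x∈B : ⟨w,x⟩>0} and B⁻ = {x∈B : ⟨w,x⟩<0}. -/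
open Finset

/-- On a ball around a point of the hyperplane `⟨w,x⟩ = 0`, if the coefficient sums over the
positively and negatively colinear families agree, then on both half-balls the combined ReLU
sum is the linear function `x ↦ ⟨∑_{v∈C⁺} c_v v, x⟩`. -/
theorem relu_colinear_family_linear_on_halfballs {n : ℕ} {ι : Type*}
    (w : Fin n → ℝ) (hw : w ≠ 0)
    (Cp Cm : Finset ι) (v : ι → (Fin n → ℝ)) (c : ι → ℝ)
    (hCp : ∀ i ∈ Cp, ∃ α : ℝ, 0 < α ∧ v i = α • w)
    (hCm : ∀ i ∈ Cm, ∃ α : ℝ, α < 0 ∧ v i = α • w)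
    (x₀ : Fin n → ℝ) (hx₀ : ∑ j, w j * x₀ j = 0)
    (r : ℝ) (hr : 0 < r)
    (L : Fin n → ℝ)
    (hlin : ∀ x ∈ Metric.ball x₀ r,
      (∑ i ∈ Cp, c i * relu (∑ j, v i j * x j)) + ∑ i ∈ Cm, c i * relu (∑ j, v i j * x j)
        = ∑ j, L j * x j)
    (hbal : ∑ i ∈ Cp, c i • v i = ∑ i ∈ Cm, c i • v i) :
    ∀ x ∈ Metric.ball x₀ r,
      (0 < ∑ j, w j * x j ∨ ∑ j, w j * x j < 0) →
        (∑ i ∈ Cp, c i * relu (∑ j, v i j * x j)) + ∑ i ∈ Cm, c i * relu (∑ j, v i j * x j)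
          = ∑ j, (∑ i ∈ Cp, c i • v i) j * x j := by
  intro x hx hsign
  set s := ∑ j, w j * x j with hs
  have key : ∀ (i : ι) (α : ℝ), v i = α • w → ∑ j, v i j * x j = α * s := by
    intro i α h
    simp only [h, Pi.smul_apply, smul_eq_mul, hs, Finset.mul_sum, mul_assoc]
  have swap : ∀ (T : Finset ι), ∑ j, (∑ i ∈ T, c i • v i) j * x j
      = ∑ i ∈ T, c i * ∑ j, v i j * x j := by
    intro T
    simp only [Finset.sum_apply, Pi.smul_apply, smul_eq_mul, Finset.sum_mul, Finset.mul_sum,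
      mul_assoc]
    rw [Finset.sum_comm]
  rcases hsign with hpos | hneg
  · have hp : ∑ i ∈ Cp, c i * relu (∑ j, v i j * x j)
        = ∑ i ∈ Cp, c i * ∑ j, v i j * x j := by
      refine Finset.sum_congr rfl fun i hi => ?_
      obtain ⟨α, hα, hv⟩ := hCp i hi
      rw [key i α hv, relu, max_eq_left (le_of_lt (mul_pos hα hpos))]
    have hm : ∑ i ∈ Cm, c i * relu (∑ j, v i j * x j) = 0 := by
      refine Finset.sum_eq_zero fun i hi => ?_
      obtain ⟨α, hα, hv⟩ := hCm i hi
      rw [key i α hv, relu, max_eq_right (le_of_lt (mul_neg_of_neg_of_pos hα hpos)), mul_zero]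
    rw [hp, hm, add_zero, swap]
  · have hp : ∑ i ∈ Cp, c i * relu (∑ j, v i j * x j) = 0 := by
      refine Finset.sum_eq_zero fun i hi => ?_
      obtain ⟨α, hα, hv⟩ := hCp i hi
      rw [key i α hv, relu, max_eq_right (le_of_lt (mul_neg_of_pos_of_neg hα hneg)), mul_zero]
    have hm : ∑ i ∈ Cm, c i * relu (∑ j, v i j * x j)
        = ∑ i ∈ Cm, c i * ∑ j, v i j * x j := by
      refine Finset.sum_congr rfl fun i hi => ?_
      obtain ⟨α, hα, hv⟩ := hCm i hi
      rw [key i α hv, relu, max_eq_left (le_of_lt (mul_pos_of_neg_of_neg hα hneg))]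
    rw [hp, hm, zero_add, hbal, swap]
end
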